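/- arXiv:2202.13983 — 3 statements merged into one kernel-verified Lean document; each statement's English description precedes it below -/
import Mathlib

section
/- Let T1 and T2 be finite trees. Then the set of weight centers of the Cartesian product satisfies W(T1 □ T2) = W(T1) × W(T2); that is, a vertex (u,v) of T1 □ T2 is a weight center of T1 □ T2 if and only if u is a weight center of T1 and v is a weight center of T2. -/
open SimpleGraph Finset

/-- The weight of a graph at a vertex: the sum of the distances to all vertices. -/
noncomputable def gWeight {V : Type*} [Fintype V] (G : SimpleGraph V) (v : V) : ℕ :=
  ∑ u, G.dist u v

/-- A vertex is a weight center if its weight is minimum among all vertices. -/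
def IsWeightCenter {V : Type*} [Fintype V] (G : SimpleGraph V) (v : V) : Prop :=
  ∀ u, gWeight G v ≤ gWeight G u

/-- The level of a vertex: the minimum distance to a weight center. -/
noncomputable def level {V : Type*} [Fintype V] (G : SimpleGraph V) (u : V) : ℕ :=
  sInf {d | ∃ w, IsWeightCenter G w ∧ d = G.dist u w}

/-- The total level of a graph: the sum of the levels of all vertices. -/
noncomputable def totalLevel {V : Type*} [Fintype V] (G : SimpleGraph V) : ℕ :=
  ∑ u, level G u

/-- The diameter: the maximum distance between two vertices. -/
noncomputable def graphDiam {V : Type*} [Fintype V] (G : SimpleGraph V) : ℕ :=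
  Finset.univ.sup fun p : V × V => G.dist p.1 p.2

/-- A radio labeling: |f u - f v| ≥ diam + 1 - d(u,v) for all distinct u, v. -/
def IsRadioLabeling {V : Type*} [Fintype V] (G : SimpleGraph V) (f : V → ℕ) : Prop :=
  ∀ u v : V, u ≠ v → (graphDiam G : ℤ) + 1 - G.dist u v ≤ |(f u : ℤ) - (f v : ℤ)|

/-- The span of a labeling: the maximum difference between two labels. -/
noncomputable def radioSpan {V : Type*} [Fintype V] (f : V → ℕ) : ℕ :=
  Finset.univ.sup fun p : V × V => ((f p.1 : ℤ) - (f p.2 : ℤ)).natAbs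

/-- The radio number: the minimum span of a radio labeling. -/
noncomputable def radioNumber {V : Type*} [Fintype V] (G : SimpleGraph V) : ℕ :=
  sInf {s | ∃ f : V → ℕ, IsRadioLabeling G f ∧ s = radioSpan f}

/-- The star K_{1,n}, with center vertex 0 adjacent to n leaves. -/
def starGraph (n : ℕ) : SimpleGraph (Fin (n + 1)) where
  Adj x y := x ≠ y ∧ (x = 0 ∨ y = 0)
  symm := ⟨fun _ _ h => ⟨h.1.symm, h.2.symm⟩⟩
  loopless := ⟨fun _ h => h.1 rfl⟩

open Classical in
/-- δ(x,x') = 1 if x and x' lie in different connected components of the graph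
obtained by deleting the edge ww', and 0 otherwise. -/
noncomputable def deltaEdge {V : Type*} (T : SimpleGraph V) (w w' x x' : V) : ℕ :=
  if (T.deleteEdges {s(w, w')}).connectedComponentMk x =
      (T.deleteEdges {s(w, w')}).connectedComponentMk x' then 0 else 1

private lemma walk_len_ge {V₁ V₂ : Type*} {G : SimpleGraph V₁} {H : SimpleGraph V₂}
    (hG : G.Connected) (hH : H.Connected) {x y : V₁ × V₂} (w : (G □ H).Walk x y) :
    G.dist x.1 y.1 + H.dist x.2 y.2 ≤ w.length := by
  induction w with
  | nil => simp
  | @cons a b c h w ih =>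
    rcases (boxProd_adj.mp h) with ⟨h1, h2⟩ | ⟨h1, h2⟩
    · have t := hG.dist_triangle (u := a.1) (v := b.1) (w := c.1)
      have : G.dist a.1 b.1 ≤ 1 := by
        simpa using SimpleGraph.dist_le (SimpleGraph.Walk.cons h1 SimpleGraph.Walk.nil)
      rw [SimpleGraph.Walk.length_cons, h2]
      omega
    · have t := hH.dist_triangle (u := a.2) (v := b.2) (w := c.2)
      have : H.dist a.2 b.2 ≤ 1 := by
        simpa using SimpleGraph.dist_le (SimpleGraph.Walk.cons h1 SimpleGraph.Walk.nil)
      rw [SimpleGraph.Walk.length_cons, h2]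
      omega

private lemma boxProd_dist {V₁ V₂ : Type*} {G : SimpleGraph V₁} {H : SimpleGraph V₂}
    (hG : G.Connected) (hH : H.Connected) (x y : V₁ × V₂) :
    (G □ H).dist x y = G.dist x.1 y.1 + H.dist x.2 y.2 := by
  refine le_antisymm ?_ ?_
  · obtain ⟨w1, hw1⟩ := (hG x.1 y.1).exists_walk_length_eq_dist
    obtain ⟨w2, hw2⟩ := (hH x.2 y.2).exists_walk_length_eq_dist
    have := SimpleGraph.dist_le ((w1.boxProdLeft H x.2).append (w2.boxProdRight G y.1))
    rw [SimpleGraph.Walk.length_append] at this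
    have e1 : (w1.boxProdLeft H x.2).length = w1.length := SimpleGraph.Walk.length_map _ _
    have e2 : (w2.boxProdRight G y.1).length = w2.length := SimpleGraph.Walk.length_map _ _
    rw [e1, e2, hw1, hw2] at this
    exact this
  · obtain ⟨w, hw⟩ := ((hG.boxProd hH) x y).exists_walk_length_eq_dist
    rw [← hw]
    exact walk_len_ge hG hH w

/-- W(T1 □ T2) = W(T1) × W(T2). -/
theorem stmt_6 {V₁ V₂ : Type*} [Fintype V₁] [Fintype V₂]
    (T₁ : SimpleGraph V₁) (T₂ : SimpleGraph V₂) (h₁ : T₁.IsTree) (h₂ : T₂.IsTree)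
    (u : V₁) (v : V₂) :
    IsWeightCenter (T₁ □ T₂) (u, v) ↔ IsWeightCenter T₁ u ∧ IsWeightCenter T₂ v := by
  have c1 := h₁.isConnected
  have c2 := h₂.isConnected
  have hw : ∀ (a : V₁) (b : V₂), gWeight (T₁ □ T₂) (a, b)
      = Fintype.card V₂ * gWeight T₁ a + Fintype.card V₁ * gWeight T₂ b := by
    intro a b
    unfold gWeight
    rw [Fintype.sum_prod_type]
    simp only [boxProd_dist c1 c2]
    simp only [Finset.sum_add_distrib, Finset.sum_const, Finset.card_univ, smul_eq_mul,
      Finset.mul_sum, Finset.sum_comm (s := Finset.univ) (t := Finset.univ)]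
  haveI : Nonempty V₁ := c1.nonempty
  haveI : Nonempty V₂ := c2.nonempty
  have hc1 : 0 < Fintype.card V₁ := Fintype.card_pos
  have hc2 : 0 < Fintype.card V₂ := Fintype.card_pos
  constructor
  · intro h
    constructor
    · intro a
      have := h (a, v)
      rw [hw, hw] at this
      have : Fintype.card V₂ * gWeight T₁ u ≤ Fintype.card V₂ * gWeight T₁ a := by omega
      exact le_of_mul_le_mul_left this hc2
    · intro b
      have := h (u, b)
      rw [hw, hw] at this
      have : Fintype.card V₁ * gWeight T₂ v ≤ Fintype.card V₁ * gWeight T₂ b := by omega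
      exact le_of_mul_le_mul_left this hc1
  · rintro ⟨ha, hb⟩ ⟨a, b⟩
    rw [hw, hw]
    exact Nat.add_le_add (Nat.mul_le_mul_left _ (ha a)) (Nat.mul_le_mul_left _ (hb b))
end

section
/- Let T1 and T2 be finite trees, each with exactly two weight centers, say W(T1) = {w1, w1'} and W(T2) = {w2, w2'}; let m = |V(T1)|, n = |V(T2)| and p = mn. For i = 1,2 and vertices x, x' of T_i, set δ_i(x,x') = 1 if x and x' lie in different connected components of the graph obtained from T_i by deleting the edge w_i w_i', and δ_i(x,x') = 0 otherwise; for vertices z = (x,y) and z' = (x',y') of T1 □ T2 set δ(z,z') = δ_1(x,x') + δ_2(y,y'). Then for every enumeration z_0, z_1, …, z_{p−1} of the vertices of T1 □ T2 (a bijection from {0,…,p−1} to V(T1 □ T2)), one has ∑_{i=0}^{p−2} δ(z_i, z_{i+1}) ≤ 2p − 3. -/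
open SimpleGraph Finset

lemma reach_aux {V : Type*} (G : SimpleGraph V) (a b : V) :
    ∀ {u x : V}, G.Walk u x →
      (G.deleteEdges {s(a, b)}).Reachable u x ∨
      (G.deleteEdges {s(a, b)}).Reachable u a ∨
      (G.deleteEdges {s(a, b)}).Reachable u b := by
  intro u x p
  induction p with
  | nil => exact Or.inl (Reachable.refl _)
  | @cons u v _ hadj q ih =>
    by_cases he : s(u, v) = s(a, b)
    · rw [Sym2.eq_iff] at he
      rcases he with ⟨rfl, rfl⟩ | ⟨rfl, rfl⟩
      · exact Or.inr (Or.inl (Reachable.refl _))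
      · exact Or.inr (Or.inr (Reachable.refl _))
    · have hadj' : (G.deleteEdges {s(a, b)}).Adj u v := by
        rw [SimpleGraph.deleteEdges_adj]
        exact ⟨hadj, by simpa using he⟩
      rcases ih with h' | h' | h'
      · exact Or.inl (hadj'.reachable.trans h')
      · exact Or.inr (Or.inl (hadj'.reachable.trans h'))
      · exact Or.inr (Or.inr (hadj'.reachable.trans h'))

lemma comp_endpoint {V : Type*} (G : SimpleGraph V) (a b : V) (h : G.Connected) (u : V) :
    (G.deleteEdges {s(a, b)}).connectedComponentMk u =
      (G.deleteEdges {s(a, b)}).connectedComponentMk a ∨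
    (G.deleteEdges {s(a, b)}).connectedComponentMk u =
      (G.deleteEdges {s(a, b)}).connectedComponentMk b := by
  obtain ⟨p⟩ := h.preconnected u a
  rcases reach_aux G a b p with h' | h' | h'
  · exact Or.inl (ConnectedComponent.sound h')
  · exact Or.inl (ConnectedComponent.sound h')
  · exact Or.inr (ConnectedComponent.sound h')

lemma parity_flip {α : Type*} (g : ℕ → α) (a b : α) (hab : ∀ i, g i = a ∨ g i = b)
    (N : ℕ) (hfl : ∀ i < N, g (i + 1) ≠ g i) : ∀ i ≤ N, (g i = g 0 ↔ Even i) := by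
  intro i hi
  induction i with
  | zero => simp
  | succ n ih =>
    have hn := ih (Nat.le_of_succ_le hi)
    have hne := hfl n (lt_of_lt_of_le (Nat.lt_succ_self n) hi)
    rw [Nat.even_add_one, ← hn]
    rcases hab n with h | h <;> rcases hab (n + 1) with h' | h' <;>
        rcases hab 0 with h0 | h0 <;> rw [h, h'] at hne <;> rw [h, h', h0] <;>
      first
        | exact absurd rfl hne
        | simp [hne, hne.symm]

lemma deltaEdge_le_one {V : Type*} (T : SimpleGraph V) (w w' x x' : V) :
    deltaEdge T w w' x x' ≤ 1 := by
  unfold deltaEdge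
  split <;> omega

lemma deltaEdge_eq_zero {V : Type*} (T : SimpleGraph V) (w w' x x' : V)
    (h : (T.deleteEdges {s(w, w')}).connectedComponentMk x =
      (T.deleteEdges {s(w, w')}).connectedComponentMk x') :
    deltaEdge T w w' x x' = 0 := by
  unfold deltaEdge
  rw [if_pos h]

/-- For trees T1, T2 each with exactly two weight centers, any enumeration
z_0, …, z_{p−1} of the vertices of T1 □ T2 satisfies ∑ δ(z_i, z_{i+1}) ≤ 2p − 3. -/
theorem stmt_7 {V₁ V₂ : Type*} [Fintype V₁] [Fintype V₂]
    (T₁ : SimpleGraph V₁) (T₂ : SimpleGraph V₂) (h₁ : T₁.IsTree) (h₂ : T₂.IsTree)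
    (w₁ w₁' : V₁) (hne₁ : w₁ ≠ w₁') (hW₁ : {v | IsWeightCenter T₁ v} = {w₁, w₁'})
    (w₂ w₂' : V₂) (hne₂ : w₂ ≠ w₂') (hW₂ : {v | IsWeightCenter T₂ v} = {w₂, w₂'})
    (z : ℕ → V₁ × V₂)
    (hz : Function.Bijective
      fun i : Fin (Fintype.card V₁ * Fintype.card V₂) => z i) :
    ∑ i ∈ Finset.range (Fintype.card V₁ * Fintype.card V₂ - 1),
        (deltaEdge T₁ w₁ w₁' (z i).1 (z (i + 1)).1 +
          deltaEdge T₂ w₂ w₂' (z i).2 (z (i + 1)).2) ≤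
      2 * (Fintype.card V₁ * Fintype.card V₂) - 3 := by
  classical
  set p := Fintype.card V₁ * Fintype.card V₂ with hp
  have hm : 2 ≤ Fintype.card V₁ := Fintype.one_lt_card_iff_nontrivial.mpr ⟨w₁, w₁', hne₁⟩
  have hn : 2 ≤ Fintype.card V₂ := Fintype.one_lt_card_iff_nontrivial.mpr ⟨w₂, w₂', hne₂⟩
  have hp4 : 4 ≤ p := le_trans (by norm_num) (Nat.mul_le_mul hm hn)
  have hdelta : ∀ u u' v v',
      deltaEdge T₁ w₁ w₁' u u' + deltaEdge T₂ w₂ w₂' v v' ≤ 2 := by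
    intro u u' v v'
    have := deltaEdge_le_one T₁ w₁ w₁' u u'
    have := deltaEdge_le_one T₂ w₂ w₂' v v'
    omega
  -- key claim: some step fails to cross both cuts
  have key : ∃ i ∈ Finset.range (p - 1),
      deltaEdge T₁ w₁ w₁' (z i).1 (z (i + 1)).1 +
        deltaEdge T₂ w₂ w₂' (z i).2 (z (i + 1)).2 ≤ 1 := by
    by_contra hcon
    push_neg at hcon
    have hall : ∀ i < p - 1,
        (T₁.deleteEdges {s(w₁, w₁')}).connectedComponentMk (z (i + 1)).1 ≠
          (T₁.deleteEdges {s(w₁, w₁')}).connectedComponentMk (z i).1 ∧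
        (T₂.deleteEdges {s(w₂, w₂')}).connectedComponentMk (z (i + 1)).2 ≠
          (T₂.deleteEdges {s(w₂, w₂')}).connectedComponentMk (z i).2 := by
      intro i hi
      have hgt := hcon i (Finset.mem_range.mpr hi)
      constructor
      · intro h
        have h0 := deltaEdge_eq_zero T₁ w₁ w₁' (z i).1 (z (i + 1)).1 h.symm
        have := deltaEdge_le_one T₂ w₂ w₂' (z i).2 (z (i + 1)).2
        omega
      · intro h
        have h0 := deltaEdge_eq_zero T₂ w₂ w₂' (z i).2 (z (i + 1)).2 h.symm
        have := deltaEdge_le_one T₁ w₁ w₁' (z i).1 (z (i + 1)).1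
        omega
    have hab₁ : ∀ i, (T₁.deleteEdges {s(w₁, w₁')}).connectedComponentMk (z i).1 =
          (T₁.deleteEdges {s(w₁, w₁')}).connectedComponentMk w₁ ∨
        (T₁.deleteEdges {s(w₁, w₁')}).connectedComponentMk (z i).1 =
          (T₁.deleteEdges {s(w₁, w₁')}).connectedComponentMk w₁' := fun i =>
      comp_endpoint T₁ w₁ w₁' h₁.isConnected (z i).1
    have hab₂ : ∀ i, (T₂.deleteEdges {s(w₂, w₂')}).connectedComponentMk (z i).2 =
          (T₂.deleteEdges {s(w₂, w₂')}).connectedComponentMk w₂ ∨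
        (T₂.deleteEdges {s(w₂, w₂')}).connectedComponentMk (z i).2 =
          (T₂.deleteEdges {s(w₂, w₂')}).connectedComponentMk w₂' := fun i =>
      comp_endpoint T₂ w₂ w₂' h₂.isConnected (z i).2
    have par₁ := parity_flip
      (fun i => (T₁.deleteEdges {s(w₁, w₁')}).connectedComponentMk (z i).1) _ _ hab₁
      (p - 1) (fun i hi => (hall i hi).1)
    have par₂ := parity_flip
      (fun i => (T₂.deleteEdges {s(w₂, w₂')}).connectedComponentMk (z i).2) _ _ hab₂
      (p - 1) (fun i hi => (hall i hi).2)
    -- the vertex (z 0 .1, z 1 .2) gives a parity contradiction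
    obtain ⟨j, hj⟩ := hz.surjective ((z 0).1, (z 1).2)
    have hj' : z (j : ℕ) = ((z 0).1, (z 1).2) := hj
    have hj1 : (z (j : ℕ)).1 = (z 0).1 := by rw [hj']
    have hj2 : (z (j : ℕ)).2 = (z 1).2 := by rw [hj']
    have hjle : (j : ℕ) ≤ p - 1 := Nat.le_sub_one_of_lt j.isLt
    have heven : Even (j : ℕ) := by
      rw [← par₁ (j : ℕ) hjle]
      simp only [hj1]
    have h01 := (hall 0 (by omega)).2
    have hj0 := (par₂ (j : ℕ) hjle).mpr heven
    simp only [hj2] at hj0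
    exact h01 hj0
  obtain ⟨i₀, hi₀mem, hi₀⟩ := key
  have hrest : ∑ i ∈ (Finset.range (p - 1)).erase i₀,
      (deltaEdge T₁ w₁ w₁' (z i).1 (z (i + 1)).1 +
        deltaEdge T₂ w₂ w₂' (z i).2 (z (i + 1)).2) ≤ 2 * (p - 2) := by
    calc _ ≤ ∑ _i ∈ (Finset.range (p - 1)).erase i₀, 2 :=
          Finset.sum_le_sum fun i _ => hdelta _ _ _ _
      _ = 2 * (p - 2) := by
          rw [Finset.sum_const, Finset.card_erase_of_mem hi₀mem, Finset.card_range,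
            smul_eq_mul]
          omega
  calc ∑ i ∈ Finset.range (p - 1),
        (deltaEdge T₁ w₁ w₁' (z i).1 (z (i + 1)).1 +
          deltaEdge T₂ w₂ w₂' (z i).2 (z (i + 1)).2)
      = (deltaEdge T₁ w₁ w₁' (z i₀).1 (z (i₀ + 1)).1 +
          deltaEdge T₂ w₂ w₂' (z i₀).2 (z (i₀ + 1)).2) +
        ∑ i ∈ (Finset.range (p - 1)).erase i₀,
          (deltaEdge T₁ w₁ w₁' (z i).1 (z (i + 1)).1 +
            deltaEdge T₂ w₂ w₂' (z i).2 (z (i + 1)).2) :=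
        (Finset.add_sum_erase _ _ hi₀mem).symm
    _ ≤ 1 + 2 * (p - 2) := Nat.add_le_add hi₀ hrest
    _ ≤ 2 * p - 3 := by omega
end

section
/- Let T1 and T2 be finite trees with |V(T1)| = m, |V(T2)| = n, diam(T1) = d1, diam(T2) = d2, and suppose each of T1, T2 has exactly two weight centers. Let p = mn and d = d1 + d2. Then rn(T1 □ T2) ≥ (p − 1)(d − 1) − 2n·L(T1) − 2m·L(T2) + 1, where L(T_i) is the total level of T_i. -/
open SimpleGraph Finset

section TreeLemmas

variable {V : Type*} {T : SimpleGraph V}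

/-- On a shortest walk, `getVert i` is at distance `i` from the start and
`length - i` from the end. -/
lemma shortest_getVert (hconn : T.Connected) :
    ∀ {u v : V} (p : T.Walk u v), p.length = T.dist u v → ∀ i, i ≤ p.length →
      T.dist u (p.getVert i) = i ∧ T.dist (p.getVert i) v = p.length - i := by
  intro u v p
  induction p with
  | nil =>
    intro _ i hi
    simp only [Walk.length_nil, Nat.le_zero] at hi
    subst hi
    simp [SimpleGraph.dist_self]
  | @cons u z v h q ih =>
    intro hlen i hi
    have hq : q.length = T.dist z v := by
      have h1 : T.dist z v ≤ q.length := SimpleGraph.dist_le q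
      have h2 : T.dist u v ≤ T.dist u z + T.dist z v := hconn.dist_triangle
      have h3 : T.dist u z ≤ 1 := by
        simpa using SimpleGraph.dist_le (Walk.cons h Walk.nil)
      have := hlen
      simp only [Walk.length_cons] at this
      omega
    cases i with
    | zero =>
      constructor
      · simp [SimpleGraph.dist_self]
      · have := hlen
        simp only [Walk.length_cons] at this ⊢
        simp [Walk.getVert_zero, SimpleGraph.dist_comm] at this ⊢
        omega
    | succ i =>
      have hi' : i ≤ q.length := by simpa [Walk.length_cons] using hi
      obtain ⟨h1, h2⟩ := ih hq i hi'
      rw [Walk.getVert_cons_succ]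
      set m := q.getVert i with hm
      have hle : T.dist u m ≤ i + 1 := by
        calc T.dist u m ≤ T.dist u z + T.dist z m := hconn.dist_triangle
        _ ≤ 1 + i := by
          have : T.dist u z ≤ 1 := by simpa using SimpleGraph.dist_le (Walk.cons h Walk.nil)
          omega
        _ = i + 1 := by omega
      have hge : i + 1 ≤ T.dist u m := by
        have h4 : T.dist u v ≤ T.dist u m + T.dist m v := hconn.dist_triangle
        have h5 : T.dist u v = q.length + 1 := by
          simp only [Walk.length_cons] at hlen; omega
        omega
      constructor
      · omega
      · simp only [Walk.length_cons]
        omega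

lemma tree_walk_unique (hT : T.IsTree) {u v : V} {p q : T.Walk u v}
    (hp : p.IsPath) (hq : q.IsPath) : p = q := by
  have := hT.IsAcyclic.path_unique ⟨p, hp⟩ ⟨q, hq⟩
  exact congrArg Subtype.val this

lemma tree_dist_ne_of_adj (hT : T.IsTree) {a b : V} (hab : T.Adj a b) (u : V) :
    T.dist u a ≠ T.dist u b := by
  classical
  intro heq
  obtain ⟨P, hP, hPlen⟩ := hT.isConnected.exists_path_of_dist a u
  have hb : b ∉ P.support := by
    intro hb
    have hsplit := P.take_spec hb
    have h1 : T.dist a b ≤ (P.takeUntil b hb).length := SimpleGraph.dist_le _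
    have h2 : T.dist b u ≤ (P.dropUntil b hb).length := SimpleGraph.dist_le _
    have h3 : (P.takeUntil b hb).length + (P.dropUntil b hb).length = P.length := by
      rw [← Walk.length_append, hsplit]
    have hab1 : T.dist a b = 1 := (SimpleGraph.dist_eq_one_iff_adj).mpr hab
    have hcomm : T.dist b u = T.dist u b := SimpleGraph.dist_comm
    have hcomm2 : T.dist a u = T.dist u a := SimpleGraph.dist_comm
    omega
  obtain ⟨Q, hQ, hQlen⟩ := hT.isConnected.exists_path_of_dist b u
  have hW1 : (Walk.cons hab.symm P).IsPath := (Walk.cons_isPath_iff _ _).mpr ⟨hP, hb⟩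
  have := tree_walk_unique hT hW1 hQ
  have hlen : (Walk.cons hab.symm P).length = Q.length := by rw [this]
  simp only [Walk.length_cons] at hlen
  rw [hPlen, hQlen] at hlen
  rw [SimpleGraph.dist_comm (u := a) (v := u), SimpleGraph.dist_comm (u := b) (v := u)] at hlen
  omega

lemma tree_unique_closer (hT : T.IsTree) {x y z u : V} (hxy : T.Adj x y) (hxz : T.Adj x z)
    (hy : T.dist u y + 1 = T.dist u x) (hz : T.dist u z + 1 = T.dist u x) : y = z := by
  classical
  have key : ∀ {y' : V} (h : T.Adj x y'), T.dist u y' + 1 = T.dist u x →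
      ∀ (P : T.Walk y' u), P.IsPath → P.length = T.dist y' u → x ∉ P.support := by
    intro y' hxy' hy' P hP hPlen hx
    have hsplit := P.take_spec hx
    have h1 : T.dist y' x ≤ (P.takeUntil x hx).length := SimpleGraph.dist_le _
    have h2 : T.dist x u ≤ (P.dropUntil x hx).length := SimpleGraph.dist_le _
    have h3 : (P.takeUntil x hx).length + (P.dropUntil x hx).length = P.length := by
      rw [← Walk.length_append, hsplit]
    have hax : T.dist y' x = 1 := (SimpleGraph.dist_eq_one_iff_adj).mpr hxy'.symm
    have c1 : T.dist x u = T.dist u x := SimpleGraph.dist_comm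
    have c2 : T.dist y' u = T.dist u y' := SimpleGraph.dist_comm
    omega
  obtain ⟨Py, hPy, hPylen⟩ := hT.isConnected.exists_path_of_dist y u
  obtain ⟨Pz, hPz, hPzlen⟩ := hT.isConnected.exists_path_of_dist z u
  have hxPy := key hxy hy Py hPy hPylen
  have hxPz := key hxz hz Pz hPz hPzlen
  have hW1 : (Walk.cons hxy Py).IsPath := (Walk.cons_isPath_iff _ _).mpr ⟨hPy, hxPy⟩
  have hW2 : (Walk.cons hxz Pz).IsPath := (Walk.cons_isPath_iff _ _).mpr ⟨hPz, hxPz⟩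
  have heq := tree_walk_unique hT hW1 hW2
  have := congrArg (fun W => Walk.getVert W 1) heq
  simpa [Walk.getVert_cons_succ, Walk.getVert_zero] using this

lemma tree_adj_dist_cases (hT : T.IsTree) {a b : V} (hab : T.Adj a b) (u : V) :
    T.dist u b = T.dist u a + 1 ∨ T.dist u a = T.dist u b + 1 := by
  have hne := tree_dist_ne_of_adj hT hab u
  have h1 : T.dist u b ≤ T.dist u a + T.dist a b := hT.isConnected.dist_triangle
  have h2 : T.dist u a ≤ T.dist u b + T.dist b a := hT.isConnected.dist_triangle
  have hab1 : T.dist a b = 1 := (SimpleGraph.dist_eq_one_iff_adj).mpr hab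
  have hba1 : T.dist b a = 1 := (SimpleGraph.dist_eq_one_iff_adj).mpr hab.symm
  omega

variable [Fintype V]

open Classical in
lemma gWeight_diff (hT : T.IsTree) {a b : V} (hab : T.Adj a b) :
    (gWeight T b : ℤ) - gWeight T a =
      2 * ((univ : Finset V).filter (fun u => T.dist u a < T.dist u b)).card -
        Fintype.card V := by
  classical
  have h : (gWeight T b : ℤ) - gWeight T a = ∑ u, ((T.dist u b : ℤ) - T.dist u a) := by
    simp [gWeight, Finset.sum_sub_distrib]
  rw [h, ← Finset.sum_filter_add_sum_filter_not univ (fun u => T.dist u a < T.dist u b)]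
  have h1 : ∑ u ∈ univ.filter (fun u => T.dist u a < T.dist u b),
      ((T.dist u b : ℤ) - T.dist u a) =
      ((univ : Finset V).filter (fun u => T.dist u a < T.dist u b)).card := by
    rw [Finset.sum_congr rfl (fun u hu => ?_), Finset.sum_const, nsmul_eq_mul, mul_one]
    simp only [Finset.mem_filter] at hu
    rcases tree_adj_dist_cases hT hab u with hc | hc
    · rw [hc]; push_cast; ring
    · omega
  have h2 : ∑ u ∈ univ.filter (fun u => ¬ T.dist u a < T.dist u b),
      ((T.dist u b : ℤ) - T.dist u a) =
      -(((univ : Finset V).filter (fun u => ¬ T.dist u a < T.dist u b)).card : ℤ) := by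
    rw [Finset.sum_congr rfl (fun u hu => ?_), Finset.sum_const, nsmul_eq_mul, mul_neg_one]
    simp only [Finset.mem_filter] at hu
    rcases tree_adj_dist_cases hT hab u with hc | hc
    · omega
    · rw [hc]; push_cast; ring
  rw [h1, h2]
  have h3 := Finset.card_filter_add_card_filter_not
    (s := (univ : Finset V)) (p := fun u => T.dist u a < T.dist u b)
  rw [Finset.card_univ] at h3
  push_cast
  omega

lemma tree_centers_adj (hT : T.IsTree) {w w' : V} (hne : w ≠ w')
    (hw : IsWeightCenter T w) (hw' : IsWeightCenter T w') : T.Adj w w' := by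
  classical
  set k := T.dist w w' with hk
  have hk0 : 0 < k := hT.isConnected.pos_dist_of_ne hne
  by_contra hadj
  have hk1 : k ≠ 1 := fun h => hadj ((SimpleGraph.dist_eq_one_iff_adj).mp h)
  have hk2 : 2 ≤ k := by omega
  obtain ⟨P, hPlen⟩ := hT.isConnected.exists_walk_length_eq_dist w w'
  set x : ℕ → V := fun i => P.getVert i with hx
  have hxd : ∀ i, i ≤ k → T.dist w (x i) = i := by
    intro i hi
    exact (shortest_getVert hT.isConnected P hPlen i (by omega)).1
  have hxne : ∀ i j, i ≤ k → j ≤ k → i ≠ j → x i ≠ x j := by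
    intro i j hi hj hij hxx
    rw [← hxd i hi, hxx, hxd j hj] at hij
    exact hij rfl
  have hadj_i : ∀ i, i < k → T.Adj (x i) (x (i + 1)) := by
    intro i hi
    exact P.adj_getVert_succ (by omega)
  set A : ℕ → Finset V := fun i =>
    (univ : Finset V).filter (fun u => T.dist u (x i) < T.dist u (x (i + 1))) with hA
  have hdiff : ∀ i, i < k → (gWeight T (x (i + 1)) : ℤ) - gWeight T (x i) =
      2 * (A i).card - Fintype.card V := fun i hi => gWeight_diff hT (hadj_i i hi)
  have hchain : ∀ i, i + 1 < k → (A i).card < (A (i + 1)).card := by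
    intro i hi
    apply Finset.card_lt_card
    constructor
    · intro u hu
      simp only [hA, Finset.mem_filter, Finset.mem_univ, true_and] at hu ⊢
      by_contra hcon
      have hne2 := tree_adj_dist_cases hT (hadj_i (i+1) hi) u
      have hxx : x (i+1+1) = x (i+2) := by norm_num
      rw [hxx] at hne2 hcon
      have e1 : T.dist u (x i) + 1 = T.dist u (x (i+1)) := by
        rcases tree_adj_dist_cases hT (hadj_i i (by omega)) u with hc | hc <;> omega
      have e2 : T.dist u (x (i+2)) + 1 = T.dist u (x (i+1)) := by
        rcases hne2 with hc | hc <;> omega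
      have := tree_unique_closer hT (hadj_i i (by omega)).symm
        (hadj_i (i+1) hi) e1 e2
      exact hxne i (i+2) (by omega) (by omega) (by omega) this
    · intro hsub
      have hmem : x (i+1) ∈ A (i+1) := by
        simp only [hA, Finset.mem_filter, Finset.mem_univ, true_and]
        rw [SimpleGraph.dist_self]
        exact hT.isConnected.pos_dist_of_ne (hxne (i+1) (i+2) (by omega) (by omega) (by omega))
      have := hsub hmem
      simp only [hA, Finset.mem_filter, Finset.mem_univ, true_and] at this
      rw [SimpleGraph.dist_self] at this
      omega
  have hmono : ∀ i, i < k → (A 0).card + i ≤ (A i).card := by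
    intro i
    induction i with
    | zero => intro _; omega
    | succ n ih =>
      intro hn
      have := hchain n hn
      have := ih (by omega)
      omega
  have hA0 : (Fintype.card V : ℤ) ≤ 2 * (A 0).card := by
    have h1 : gWeight T (x 0) ≤ gWeight T (x 1) := by
      have : x 0 = w := P.getVert_zero
      rw [this]; exact hw _
    have h2 := hdiff 0 (by omega)
    norm_num at h2
    omega
  have htel : (gWeight T w' : ℤ) - gWeight T w =
      ∑ i ∈ Finset.range k, ((gWeight T (x (i+1)) : ℤ) - gWeight T (x i)) := by
    rw [Finset.sum_range_sub (fun i => (gWeight T (x i) : ℤ))]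
    have e0 : x 0 = w := P.getVert_zero
    have ek : x k = w' := by
      have := P.getVert_length
      simpa [hx, hPlen] using this
    rw [e0, ek]
  have hpos : 0 < (gWeight T w' : ℤ) - gWeight T w := by
    rw [htel]
    have hterm : ∀ i ∈ Finset.range k, (0:ℤ) ≤
        (gWeight T (x (i+1)) : ℤ) - gWeight T (x i) := by
      intro i hi
      rw [Finset.mem_range] at hi
      rw [hdiff i hi]
      have := hmono i hi
      omega
    have h1mem : 1 ∈ Finset.range k := by simp; omega
    have hbig : (2:ℤ) ≤ (gWeight T (x (1+1)) : ℤ) - gWeight T (x 1) := by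
      rw [hdiff 1 (by omega)]
      have := hmono 1 (by omega)
      omega
    calc (0:ℤ) < 2 := by norm_num
    _ ≤ (gWeight T (x (1+1)) : ℤ) - gWeight T (x 1) := hbig
    _ ≤ ∑ i ∈ Finset.range k, ((gWeight T (x (i+1)) : ℤ) - gWeight T (x i)) :=
        Finset.single_le_sum hterm h1mem
  have := hw' w
  omega

lemma level_eq_min {w w' : V} (hset : {v | IsWeightCenter T v} = {w, w'}) (u : V) :
    level T u = min (T.dist u w) (T.dist u w') := by
  have hSet : {d | ∃ c, IsWeightCenter T c ∧ d = T.dist u c} =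
      {T.dist u w, T.dist u w'} := by
    ext d
    simp only [Set.mem_setOf_eq, Set.mem_insert_iff, Set.mem_singleton_iff]
    constructor
    · rintro ⟨c, hc, rfl⟩
      have : c ∈ ({w, w'} : Set V) := hset ▸ hc
      rcases this with h | h <;> [left; right] <;> rw [h]
    · rintro (rfl | rfl)
      · exact ⟨w, by rw [← Set.mem_setOf_eq (p := fun v => IsWeightCenter T v), hset]; simp, rfl⟩
      · exact ⟨w', by rw [← Set.mem_setOf_eq (p := fun v => IsWeightCenter T v), hset]; simp, rfl⟩
  rw [level, hSet]
  apply le_antisymm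
  · rcases min_cases (T.dist u w) (T.dist u w') with ⟨h1, _⟩ | ⟨h1, _⟩ <;> rw [h1]
    · exact Nat.sInf_le (by simp)
    · exact Nat.sInf_le (by simp)
  · have hne : ({T.dist u w, T.dist u w'} : Set ℕ).Nonempty := ⟨T.dist u w, by simp⟩
    have hm := Nat.sInf_mem hne
    simp only [Set.mem_insert_iff, Set.mem_singleton_iff] at hm
    rcases hm with h | h
    · rw [h]; exact min_le_left _ _
    · rw [h]; exact min_le_right _ _
  
/-- The structural facts we need about a tree with exactly two weight centers. -/
lemma tree_struct (hT : T.IsTree) (hc : {v | IsWeightCenter T v}.ncard = 2) :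
    ∃ s : V → Bool, (∃ a, s a = true) ∧ (∃ a, s a = false) ∧
      ∀ u v : V, T.dist u v ≤ level T u + level T v + (if s u = s v then 0 else 1) := by
  obtain ⟨w, w', hne, hset⟩ := Set.ncard_eq_two.mp hc
  have hw : IsWeightCenter T w := by
    have : w ∈ {v | IsWeightCenter T v} := by rw [hset]; simp
    exact this
  have hw' : IsWeightCenter T w' := by
    have : w' ∈ {v | IsWeightCenter T v} := by rw [hset]; simp
    exact this
  have hadj : T.Adj w w' := tree_centers_adj hT hne hw hw'
  refine ⟨fun u => decide (T.dist u w < T.dist u w'), ⟨w, ?_⟩, ⟨w', ?_⟩, ?_⟩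
  · simp only [decide_eq_true_iff]
    rw [SimpleGraph.dist_self]
    have : T.dist w w' = 1 := SimpleGraph.dist_eq_one_iff_adj.mpr hadj
    omega
  · simp only [decide_eq_false_iff_not, not_lt]
    rw [SimpleGraph.dist_self]
    omega
  · intro u v
    have pmu := tree_adj_dist_cases hT hadj u
    have pmv := tree_adj_dist_cases hT hadj v
    have lu := level_eq_min hset u
    have lv := level_eq_min hset v
    have t1 : T.dist u v ≤ T.dist u w + T.dist v w := by
      have := hT.isConnected.dist_triangle (u := u) (v := w) (w := v)
      have hc : T.dist w v = T.dist v w := SimpleGraph.dist_comm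
      omega
    have t2 : T.dist u v ≤ T.dist u w' + T.dist v w' := by
      have := hT.isConnected.dist_triangle (u := u) (v := w') (w := v)
      have hc : T.dist w' v = T.dist v w' := SimpleGraph.dist_comm
      omega
    by_cases hu : T.dist u w < T.dist u w' <;> by_cases hv : T.dist v w < T.dist v w'
    · rw [if_pos (by simp [hu, hv])]; omega
    · rw [if_neg (by simp [hu, hv])]; omega
    · rw [if_neg (by simp [hu, hv])]; omega
    · rw [if_pos (by simp [hu, hv])]; omega

end TreeLemmas

section BoxLemmas
variable {V₁ V₂ : Type*} {T₁ : SimpleGraph V₁} {T₂ : SimpleGraph V₂}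

lemma boxWalk_ge (h1 : T₁.Connected) (h2 : T₂.Connected) :
    ∀ {x y : V₁ × V₂} (W : (T₁ □ T₂).Walk x y),
      T₁.dist x.1 y.1 + T₂.dist x.2 y.2 ≤ W.length := by
  intro x y W
  induction W with
  | nil => simp [SimpleGraph.dist_self]
  | @cons x z y h q ih =>
    rw [SimpleGraph.boxProd_adj] at h
    rw [Walk.length_cons]
    rcases h with ⟨ha, he⟩ | ⟨ha, he⟩
    · have : T₁.dist x.1 y.1 ≤ T₁.dist x.1 z.1 + T₁.dist z.1 y.1 := h1.dist_triangle
      have hd1 : T₁.dist x.1 z.1 = 1 := SimpleGraph.dist_eq_one_iff_adj.mpr ha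
      have he2 : T₂.dist x.2 y.2 = T₂.dist z.2 y.2 := by rw [he]
      omega
    · have : T₂.dist x.2 y.2 ≤ T₂.dist x.2 z.2 + T₂.dist z.2 y.2 := h2.dist_triangle
      have hd2 : T₂.dist x.2 z.2 = 1 := SimpleGraph.dist_eq_one_iff_adj.mpr ha
      have he2 : T₁.dist x.1 y.1 = T₁.dist z.1 y.1 := by rw [he]
      omega

lemma boxDist_ge (h1 : T₁.Connected) (h2 : T₂.Connected) (x y : V₁ × V₂) :
    T₁.dist x.1 y.1 + T₂.dist x.2 y.2 ≤ (T₁ □ T₂).dist x y := by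
  obtain ⟨W, hW⟩ := (h1.boxProd h2).exists_walk_length_eq_dist x y
  rw [← hW]
  exact boxWalk_ge h1 h2 W

lemma boxDist_le (h1 : T₁.Connected) (h2 : T₂.Connected) (x y : V₁ × V₂) :
    (T₁ □ T₂).dist x y ≤ T₁.dist x.1 y.1 + T₂.dist x.2 y.2 := by
  obtain ⟨a, b⟩ := x
  obtain ⟨c, d⟩ := y
  obtain ⟨p, hp⟩ := h1.exists_walk_length_eq_dist a c
  obtain ⟨q, hq⟩ := h2.exists_walk_length_eq_dist b d
  have hle := SimpleGraph.dist_le ((p.boxProdLeft T₂ b).append (q.boxProdRight T₁ c))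
  rw [Walk.length_append] at hle
  simp only [Walk.boxProdLeft, Walk.boxProdRight, Walk.length_map] at hle
  dsimp only
  have el1 : (p.boxProdLeft T₂ b).length = p.length := Walk.length_map _ _
  have el2 : (q.boxProdRight T₁ c).length = q.length := Walk.length_map _ _
  have hle2 := SimpleGraph.dist_le ((p.boxProdLeft T₂ b).append (q.boxProdRight T₁ c))
  rw [Walk.length_append, el1, el2] at hle2
  omega

end BoxLemmas

lemma bool_flip {x y z : Bool} (h : x ≠ y) : (x = z) ↔ ¬(y = z) := by
  cases x <;> cases y <;> cases z <;> simp_all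


/-- Lower bound for rn(T1 □ T2) when both trees have exactly two weight centers. -/
theorem stmt_10 {V₁ V₂ : Type*} [Fintype V₁] [Fintype V₂]
    (T₁ : SimpleGraph V₁) (T₂ : SimpleGraph V₂) (h₁ : T₁.IsTree) (h₂ : T₂.IsTree)
    (hc₁ : {v | IsWeightCenter T₁ v}.ncard = 2)
    (hc₂ : {v | IsWeightCenter T₂ v}.ncard = 2) :
    ((Fintype.card V₁ * Fintype.card V₂ : ℤ) - 1) *
          ((graphDiam T₁ : ℤ) + (graphDiam T₂ : ℤ) - 1) -
        2 * (Fintype.card V₂ : ℤ) * (totalLevel T₁ : ℤ) -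
        2 * (Fintype.card V₁ : ℤ) * (totalLevel T₂ : ℤ) + 1 ≤
      (radioNumber (T₁ □ T₂) : ℤ) := by
  classical
  obtain ⟨s₁, ⟨a₁t, ha₁t⟩, ⟨a₁f, ha₁f⟩, hs₁⟩ := tree_struct h₁ hc₁
  obtain ⟨s₂, ⟨a₂t, ha₂t⟩, ⟨a₂f, ha₂f⟩, hs₂⟩ := tree_struct h₂ hc₂
  set m := Fintype.card V₁ with hm
  set n := Fintype.card V₂ with hn
  -- cardinality bounds
  have hm2 : 2 ≤ m := by
    obtain ⟨w, w', hne, _⟩ := Set.ncard_eq_two.mp hc₁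
    exact Fintype.one_lt_card_iff.mpr ⟨w, w', hne⟩
  have hn2 : 2 ≤ n := by
    obtain ⟨w, w', hne, _⟩ := Set.ncard_eq_two.mp hc₂
    exact Fintype.one_lt_card_iff.mpr ⟨w, w', hne⟩
  have hV₁ : Nonempty V₁ := Fintype.card_pos_iff.mp (by omega)
  have hV₂ : Nonempty V₂ := Fintype.card_pos_iff.mp (by omega)
  set d₁ := graphDiam T₁ with hd₁
  set d₂ := graphDiam T₂ with hd₂
  set D := graphDiam (T₁ □ T₂) with hD
  set L₁ := totalLevel T₁ with hL₁
  set L₂ := totalLevel T₂ with hL₂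
  -- diameter of the box product is at least d₁ + d₂
  have hDge : d₁ + d₂ ≤ D := by
    obtain ⟨pr₁, _, hpr₁⟩ := Finset.exists_mem_eq_sup (univ : Finset (V₁ × V₁))
      univ_nonempty (fun p : V₁ × V₁ => T₁.dist p.1 p.2)
    obtain ⟨pr₂, _, hpr₂⟩ := Finset.exists_mem_eq_sup (univ : Finset (V₂ × V₂))
      univ_nonempty (fun p : V₂ × V₂ => T₂.dist p.1 p.2)
    have h1 := boxDist_ge h₁.isConnected h₂.isConnected (pr₁.1, pr₂.1) (pr₁.2, pr₂.2)
    dsimp only at h1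
    have h2 : (T₁ □ T₂).dist (pr₁.1, pr₂.1) (pr₁.2, pr₂.2) ≤ D :=
      Finset.le_sup (f := fun p : (V₁ × V₂) × (V₁ × V₂) => (T₁ □ T₂).dist p.1 p.2)
        (Finset.mem_univ ((pr₁.1, pr₂.1), (pr₁.2, pr₂.2)))
    have e1 : d₁ = T₁.dist pr₁.1 pr₁.2 := hpr₁
    have e2 : d₂ = T₂.dist pr₂.1 pr₂.2 := hpr₂
    omega
  have hdistD : ∀ u v : V₁ × V₂, (T₁ □ T₂).dist u v ≤ D := fun u v =>
    Finset.le_sup (f := fun p : (V₁ × V₂) × (V₁ × V₂) => (T₁ □ T₂).dist p.1 p.2)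
      (Finset.mem_univ (u, v))
  set p := Fintype.card (V₁ × V₂) with hp
  have hpmn : p = m * n := Fintype.card_prod V₁ V₂
  have hp4 : 4 ≤ p := by rw [hpmn]; nlinarith
  obtain ⟨q, hq1'⟩ : ∃ q, q + 1 = p := ⟨p - 1, by omega⟩
  have hq1 : q + 1 = p := hq1'
  have hqpos : 1 ≤ q := by omega
  -- the core estimate for any radio labeling
  have key : ∀ f : V₁ × V₂ → ℕ, IsRadioLabeling (T₁ □ T₂) f →
      ((m * n : ℤ) - 1) * ((d₁ : ℤ) + (d₂ : ℤ) - 1) -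
        2 * (n : ℤ) * (L₁ : ℤ) - 2 * (m : ℤ) * (L₂ : ℤ) + 1 ≤ (radioSpan f : ℤ) := by
    intro f hf
    have h_inj : Function.Injective f := by
      intro u v heq
      by_contra hne
      have h := hf u v hne
      rw [heq, sub_self, abs_zero] at h
      have := hdistD u v
      omega
    set e₀ := (Fintype.equivFin (V₁ × V₂)).symm with he₀
    set σ := Tuple.sort (fun i => f (e₀ i)) with hσ
    set g : Fin p → V₁ × V₂ := fun i => e₀ (σ i) with hgdef
    have hg_bij : Function.Bijective g := (σ.trans e₀).bijective
    have hmono : Monotone (fun i => f (g i)) := Tuple.monotone_sort (fun i => f (e₀ i))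
    have hstrict : StrictMono (fun i => f (g i)) :=
      hmono.strictMono_of_injective (h_inj.comp hg_bij.injective)
    have hqlt : q < p := by omega
    set Gv : ℕ → V₁ × V₂ := fun i => g ⟨min i q, lt_of_le_of_lt (min_le_right i q) hqlt⟩
      with hGv
    have hGvi : ∀ i (hi : i ≤ q), Gv i = g ⟨i, lt_of_le_of_lt hi hqlt⟩ := by
      intro i hi
      have hmin : min i q = i := min_eq_left hi
      simp only [hGv]
      congr 1
      exact Fin.ext hmin
    have hfmono : ∀ i, i < q → f (Gv i) < f (Gv (i + 1)) := by
      intro i hi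
      rw [hGvi i (by omega), hGvi (i+1) (by omega)]
      exact hstrict (by simp [Fin.mk_lt_mk])
    have hGsurj : ∀ v : V₁ × V₂, ∃ j, j ≤ q ∧ Gv j = v := by
      intro v
      obtain ⟨jf, hjf⟩ := hg_bij.surjective v
      have hjfq : jf.1 ≤ q := by have := jf.isLt; omega
      refine ⟨jf.1, hjfq, ?_⟩
      rw [hGvi jf.1 hjfq]
      rw [← hjf]
    -- step inequality
    have hstep : ∀ i, i < q → (D : ℤ) + 1 - (T₁ □ T₂).dist (Gv i) (Gv (i+1)) ≤
        (f (Gv (i+1)) : ℤ) - (f (Gv i) : ℤ) := by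
      intro i hi
      have hne : Gv (i+1) ≠ Gv i := by
        intro h
        have := hfmono i hi
        rw [h] at this
        omega
      have h := hf (Gv (i+1)) (Gv i) hne
      have hlt : (f (Gv i) : ℤ) < (f (Gv (i+1)) : ℤ) := by exact_mod_cast hfmono i hi
      rw [abs_of_pos (by omega)] at h
      have hcomm : (T₁ □ T₂).dist (Gv (i+1)) (Gv i) = (T₁ □ T₂).dist (Gv i) (Gv (i+1)) :=
        SimpleGraph.dist_comm
      rw [hcomm] at h
      exact h
    -- telescoping
    have htel : ∑ i ∈ Finset.range q, ((f (Gv (i+1)) : ℤ) - (f (Gv i) : ℤ)) =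
        (f (Gv q) : ℤ) - (f (Gv 0) : ℤ) :=
      Finset.sum_range_sub (fun i => (f (Gv i) : ℤ)) q
    have hspan : (f (Gv q) : ℤ) - (f (Gv 0) : ℤ) ≤ (radioSpan f : ℤ) := by
      have h1 : ((f (Gv q) : ℤ) - (f (Gv 0) : ℤ)).natAbs ≤ radioSpan f :=
        Finset.le_sup (f := fun pr : (V₁ × V₂) × (V₁ × V₂) =>
          ((f pr.1 : ℤ) - (f pr.2 : ℤ)).natAbs) (Finset.mem_univ (Gv q, Gv 0))
      calc (f (Gv q) : ℤ) - (f (Gv 0) : ℤ) ≤ |(f (Gv q) : ℤ) - (f (Gv 0) : ℤ)| := le_abs_self _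
      _ = (((f (Gv q) : ℤ) - (f (Gv 0) : ℤ)).natAbs : ℤ) := (Int.abs_eq_natAbs _)
      _ ≤ (radioSpan f : ℤ) := by exact_mod_cast h1
    -- individual distance bounds
    set ℓ₁ : ℕ → ℕ := fun i => level T₁ (Gv i).1 with hℓ₁
    set ℓ₂ : ℕ → ℕ := fun i => level T₂ (Gv i).2 with hℓ₂
    set c : ℕ → ℕ := fun i =>
      (if s₁ (Gv i).1 = s₁ (Gv (i+1)).1 then 0 else 1) +
      (if s₂ (Gv i).2 = s₂ (Gv (i+1)).2 then 0 else 1) with hc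
    have hdist : ∀ i, i < q → (T₁ □ T₂).dist (Gv i) (Gv (i+1)) ≤
        ℓ₁ i + ℓ₁ (i+1) + ℓ₂ i + ℓ₂ (i+1) + c i := by
      intro i _
      have h0 := boxDist_le h₁.isConnected h₂.isConnected (Gv i) (Gv (i+1))
      have h1 := hs₁ (Gv i).1 (Gv (i+1)).1
      have h2 := hs₂ (Gv i).2 (Gv (i+1)).2
      simp only [hℓ₁, hℓ₂, hc]
      split_ifs at h1 h2 ⊢ <;> omega
    -- sum of the c-terms
    have hcsum : ∑ i ∈ Finset.range q, c i + 1 ≤ 2 * q := by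
      by_contra hcon
      push_neg at hcon
      have hge : 2 * q ≤ ∑ i ∈ Finset.range q, c i := by omega
      have hcle : ∀ i, c i ≤ 2 := by
        intro i
        simp only [hc]
        split_ifs <;> omega
      have hall : ∀ i, i < q → c i = 2 := by
        intro i hi
        by_contra hnei
        have hlt : c i < 2 := by have := hcle i; omega
        have hsum_lt : ∑ j ∈ Finset.range q, c j < ∑ j ∈ Finset.range q, 2 :=
          Finset.sum_lt_sum (fun j _ => hcle j) ⟨i, Finset.mem_range.mpr hi, hlt⟩
        rw [Finset.sum_const, Finset.card_range, smul_eq_mul] at hsum_lt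
        omega
      have hflip : ∀ i, i < q → s₁ (Gv (i+1)).1 ≠ s₁ (Gv i).1 ∧
          s₂ (Gv (i+1)).2 ≠ s₂ (Gv i).2 := by
        intro i hi
        have := hall i hi
        simp only [hc] at this
        split_ifs at this with h1 h2 h2
        · omega
        · omega
        · omega
        · exact ⟨fun h => h1 h.symm, fun h => h2 h.symm⟩
      have hpar : ∀ i, i ≤ q → ((s₁ (Gv i).1 = s₁ (Gv 0).1) ↔ Even i) ∧
          ((s₂ (Gv i).2 = s₂ (Gv 0).2) ↔ Even i) := by
        intro i
        induction i with
        | zero => intro _; simp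
        | succ k ih =>
          intro hk
          obtain ⟨ih1, ih2⟩ := ih (by omega)
          obtain ⟨hf1, hf2⟩ := hflip k (by omega)
          constructor
          · rw [bool_flip hf1, ih1, Nat.even_add_one]
          · rw [bool_flip hf2, ih2, Nat.even_add_one]
      -- find the contradictory vertex
      obtain ⟨b', hb'⟩ : ∃ b', s₂ b' ≠ s₂ (Gv 0).2 := by
        rcases Bool.eq_false_or_eq_true (s₂ (Gv 0).2) with hbv | hbv
        · exact ⟨a₂f, by rw [ha₂f, hbv]; simp⟩
        · exact ⟨a₂t, by rw [ha₂t, hbv]; simp⟩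
      obtain ⟨j, hj, hGj⟩ := hGsurj ((Gv 0).1, b')
      obtain ⟨hp1, hp2⟩ := hpar j hj
      have he1 : s₁ (Gv j).1 = s₁ (Gv 0).1 := by rw [hGj]
      have he2 : s₂ (Gv j).2 ≠ s₂ (Gv 0).2 := by rw [hGj]; exact hb'
      exact he2 (hp2.mpr (hp1.mp he1))
    -- sums of levels
    have hsum_eq₁ : ∑ i ∈ Finset.range p, ℓ₁ i = n * L₁ := by
      have h1 : ∑ i ∈ Finset.range p, ℓ₁ i = ∑ i : Fin p, ℓ₁ i.1 :=
        (Fin.sum_univ_eq_sum_range (fun i => ℓ₁ i) p).symm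
      rw [h1]
      have h2 : ∀ i : Fin p, ℓ₁ i.1 = level T₁ (g i).1 := by
        intro i
        simp only [hℓ₁]
        rw [hGvi i.1 (by have := i.isLt; omega)]
      rw [Finset.sum_congr rfl (fun i _ => h2 i)]
      rw [Function.Bijective.sum_comp hg_bij (fun u => level T₁ u.1)]
      rw [Fintype.sum_prod_type]
      simp only [Finset.sum_const, Finset.card_univ, smul_eq_mul]
      rw [← Finset.mul_sum]
      rfl
    have hsum_eq₂ : ∑ i ∈ Finset.range p, ℓ₂ i = m * L₂ := by
      have h1 : ∑ i ∈ Finset.range p, ℓ₂ i = ∑ i : Fin p, ℓ₂ i.1 :=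
        (Fin.sum_univ_eq_sum_range (fun i => ℓ₂ i) p).symm
      rw [h1]
      have h2 : ∀ i : Fin p, ℓ₂ i.1 = level T₂ (g i).2 := by
        intro i
        simp only [hℓ₂]
        rw [hGvi i.1 (by have := i.isLt; omega)]
      rw [Finset.sum_congr rfl (fun i _ => h2 i)]
      rw [Function.Bijective.sum_comp hg_bij (fun u => level T₂ u.2)]
      rw [Fintype.sum_prod_type]
      dsimp only
      rw [Finset.sum_const, Finset.card_univ, smul_eq_mul]
      rfl
    -- shifted sums
    have hsub : ∀ h : ℕ → ℕ, ∑ i ∈ Finset.range q, h (i+1) ≤ ∑ i ∈ Finset.range p, h i := by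
      intro h
      have e1 : ∑ i ∈ Finset.range q, h (i+1) = ∑ i ∈ Finset.Ico 1 (q+1), h i := by
        rw [Finset.sum_Ico_eq_sum_range]
        simp only [Nat.add_sub_cancel]
        exact Finset.sum_congr rfl (fun i _ => by rw [Nat.add_comm])
      rw [e1, ← hq1]
      apply Finset.sum_le_sum_of_subset
      rw [Finset.range_eq_Ico]
      exact Finset.Ico_subset_Ico (by omega) le_rfl
    have hsub0 : ∀ h : ℕ → ℕ, ∑ i ∈ Finset.range q, h i ≤ ∑ i ∈ Finset.range p, h i :=
      fun h => Finset.sum_le_sum_of_subset (Finset.range_subset_range.mpr (by omega))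
    -- total distance sum
    have hdsum : ∑ i ∈ Finset.range q, (T₁ □ T₂).dist (Gv i) (Gv (i+1)) + 1 ≤
        2 * (n * L₁) + 2 * (m * L₂) + 2 * q := by
      have h1 : ∑ i ∈ Finset.range q, (T₁ □ T₂).dist (Gv i) (Gv (i+1)) ≤
          ∑ i ∈ Finset.range q, (ℓ₁ i + ℓ₁ (i+1) + ℓ₂ i + ℓ₂ (i+1) + c i) :=
        Finset.sum_le_sum (fun i hi => hdist i (Finset.mem_range.mp hi))
      have h2 : ∑ i ∈ Finset.range q, (ℓ₁ i + ℓ₁ (i+1) + ℓ₂ i + ℓ₂ (i+1) + c i) =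
          (∑ i ∈ Finset.range q, ℓ₁ i) + (∑ i ∈ Finset.range q, ℓ₁ (i+1)) +
          (∑ i ∈ Finset.range q, ℓ₂ i) + (∑ i ∈ Finset.range q, ℓ₂ (i+1)) +
          (∑ i ∈ Finset.range q, c i) := by
        rw [← Finset.sum_add_distrib, ← Finset.sum_add_distrib, ← Finset.sum_add_distrib,
          ← Finset.sum_add_distrib]
      have e1 := hsub0 ℓ₁
      have e2 := hsub ℓ₁
      have e3 := hsub0 ℓ₂
      have e4 := hsub ℓ₂
      omega
    -- final arithmetic
    have hsum_cast : (∑ i ∈ Finset.range q, ((T₁ □ T₂).dist (Gv i) (Gv (i+1)) : ℤ)) + 1 ≤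
        2 * (n : ℤ) * (L₁ : ℤ) + 2 * (m : ℤ) * (L₂ : ℤ) + 2 * q := by
      have := hdsum
      push_cast [← Nat.cast_sum] at *
      push_cast
      linarith [this]
    have H3 : ∑ i ∈ Finset.range q, ((D : ℤ) + 1 - (T₁ □ T₂).dist (Gv i) (Gv (i+1))) ≤
        ∑ i ∈ Finset.range q, ((f (Gv (i+1)) : ℤ) - (f (Gv i) : ℤ)) :=
      Finset.sum_le_sum (fun i hi => hstep i (Finset.mem_range.mp hi))
    have H4 : ∑ i ∈ Finset.range q, ((D : ℤ) + 1 - (T₁ □ T₂).dist (Gv i) (Gv (i+1))) =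
        (q : ℤ) * ((D : ℤ) + 1) -
          ∑ i ∈ Finset.range q, ((T₁ □ T₂).dist (Gv i) (Gv (i+1)) : ℤ) := by
      rw [Finset.sum_sub_distrib, Finset.sum_const, Finset.card_range, nsmul_eq_mul]
    have H6 : (q : ℤ) = (m : ℤ) * (n : ℤ) - 1 := by
      have h1 : (q : ℤ) + 1 = (p : ℤ) := by exact_mod_cast hq1
      have h2 : (p : ℤ) = (m : ℤ) * (n : ℤ) := by exact_mod_cast hpmn
      linarith
    have H7 : (d₁ : ℤ) + (d₂ : ℤ) ≤ (D : ℤ) := by exact_mod_cast hDge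
    have hmul : (q : ℤ) * ((d₁ : ℤ) + (d₂ : ℤ) + 1) ≤ (q : ℤ) * ((D : ℤ) + 1) :=
      mul_le_mul_of_nonneg_left (by linarith) (by positivity)
    have hq0 : (1 : ℤ) ≤ (q : ℤ) := by exact_mod_cast hqpos
    -- assemble
    have hfinal : (q : ℤ) * ((d₁ : ℤ) + (d₂ : ℤ) + 1) -
        (2 * (n : ℤ) * (L₁ : ℤ) + 2 * (m : ℤ) * (L₂ : ℤ) + 2 * (q : ℤ) - 1) ≤
        (radioSpan f : ℤ) := by
      have := htel ▸ H3
      linarith [hspan, hmul, hsum_cast, H4 ▸ H3, htel]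
    have hexpand : ((m : ℤ) * (n : ℤ) - 1) * ((d₁ : ℤ) + (d₂ : ℤ) - 1) -
        2 * (n : ℤ) * (L₁ : ℤ) - 2 * (m : ℤ) * (L₂ : ℤ) + 1 =
        (q : ℤ) * ((d₁ : ℤ) + (d₂ : ℤ) + 1) -
        (2 * (n : ℤ) * (L₁ : ℤ) + 2 * (m : ℤ) * (L₂ : ℤ) + 2 * (q : ℤ) - 1) := by
      rw [← H6]; ring
    rw [hexpand]
    exact hfinal
  -- conclude via the infimum
  have hSne : {s | ∃ f : V₁ × V₂ → ℕ, IsRadioLabeling (T₁ □ T₂) f ∧ s = radioSpan f}.Nonempty := by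
    set f₀ : V₁ × V₂ → ℕ := fun u => ((Fintype.equivFin (V₁ × V₂)) u : ℕ) * (D + 1) with hf₀
    refine ⟨radioSpan f₀, f₀, ?_, rfl⟩
    intro u v huv
    have hij : ((Fintype.equivFin (V₁ × V₂)) u : ℕ) ≠ ((Fintype.equivFin (V₁ × V₂)) v : ℕ) := by
      intro h
      exact huv ((Fintype.equivFin (V₁ × V₂)).injective (Fin.ext h))
    set i := ((Fintype.equivFin (V₁ × V₂)) u : ℕ)
    set j := ((Fintype.equivFin (V₁ × V₂)) v : ℕ)
    have h1 : (1 : ℤ) ≤ |(i : ℤ) - (j : ℤ)| := by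
      have hne' : (i : ℤ) - (j : ℤ) ≠ 0 := sub_ne_zero.mpr (by exact_mod_cast hij)
      exact Int.one_le_abs hne'
    have h2 : |(f₀ u : ℤ) - (f₀ v : ℤ)| = |(i : ℤ) - (j : ℤ)| * ((D : ℤ) + 1) := by
      have : (f₀ u : ℤ) - (f₀ v : ℤ) = ((i : ℤ) - (j : ℤ)) * ((D : ℤ) + 1) := by
        simp only [hf₀]
        push_cast
        ring
      rw [this, abs_mul, abs_of_nonneg (by positivity : (0:ℤ) ≤ (D : ℤ) + 1)]
    rw [h2]
    have h3 : (0 : ℤ) ≤ ((T₁ □ T₂).dist u v : ℤ) := by positivity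
    nlinarith
  have hmem := Nat.sInf_mem hSne
  obtain ⟨f, hf, heq⟩ := hmem
  have hrn : radioNumber (T₁ □ T₂) = radioSpan f := heq
  rw [hrn]
  exact key f hf
end
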